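/- arXiv:2401.13261 — 3 statements merged into one kernel-verified Lean document; each statement's English description precedes it below -/
import Mathlib

section
/- Conversely, if G(x,t) is a smooth family of positive definite symmetric matrices solving ∂_t G_{ij} = ∂_i∂_j log det G with G(·,0) = G₀, define φ(x,t) = ∫₀ᵗ log( det G(x,s)/det G₀(x) ) ds. Then G(t) = G₀ − t B₀ + Hess φ, where B₀ = −Hess log det G₀, and φ solves ∂_t φ = log( det(G₀ − tB₀ + Hess φ)/det G₀ ) with φ(·,0)=0. -/
open scoped BigOperators

/-- Partial derivative in the i-th coordinate direction. -/
noncomputable def pd {n : ℕ} (i : Fin n) (f : (Fin n → ℝ) → ℝ) : (Fin n → ℝ) → ℝ :=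
  fun x => fderiv ℝ f x (Pi.single i 1)

section Aux

variable {n : ℕ}

lemma aux_contDiff_det {H : Type*} [NormedAddCommGroup H] [NormedSpace ℝ H]
    (f : H → Matrix (Fin n) (Fin n) ℝ) (hf : ∀ i j, ContDiff ℝ (⊤ : ℕ∞) fun x => f x i j) :
    ContDiff ℝ (⊤ : ℕ∞) (fun x => (f x).det) := by
  have h : (fun x => (f x).det)
      = fun x => ∑ σ : Equiv.Perm (Fin n),
          ((Equiv.Perm.sign σ : ℤ) : ℝ) * ∏ i, f x (σ i) i := by
    funext x; rw [Matrix.det_apply']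
  rw [h]
  exact ContDiff.sum fun σ _ =>
    contDiff_const.mul (contDiff_prod fun i _ => hf (σ i) i)

lemma aux_contDiff_log_det {H : Type*} [NormedAddCommGroup H] [NormedSpace ℝ H]
    (f : H → Matrix (Fin n) (Fin n) ℝ) (hf : ∀ i j, ContDiff ℝ (⊤ : ℕ∞) fun x => f x i j)
    (hpos : ∀ x, (f x).PosDef) :
    ContDiff ℝ (⊤ : ℕ∞) (fun x => Real.log (f x).det) := by
  rw [contDiff_iff_contDiffAt]
  intro x
  exact ((aux_contDiff_det f hf).contDiffAt).log (hpos x).det_pos.ne'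

lemma pd_slice {f : ((Fin n → ℝ) × ℝ) → ℝ} (hf : Differentiable ℝ f) (s : ℝ) (i : Fin n)
    (x : Fin n → ℝ) :
    pd i (fun y => f (y, s)) x = fderiv ℝ f (x, s) (Pi.single i 1, 0) := by
  have h1 : HasFDerivAt (fun y : Fin n → ℝ => (y, s))
      (ContinuousLinearMap.inl ℝ (Fin n → ℝ) ℝ) x := hasFDerivAt_prodMk_left x s
  have h2 : HasFDerivAt f (fderiv ℝ f (x, s)) (x, s) := (hf (x, s)).hasFDerivAt
  have h3 : HasFDerivAt (fun y => f (y, s))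
      ((fderiv ℝ f (x, s)).comp (ContinuousLinearMap.inl ℝ (Fin n → ℝ) ℝ)) x := h2.comp x h1
  rw [pd, h3.fderiv]
  rfl

end Aux

section Param

variable {n : ℕ}

lemma pd_hasFDerivAt_integral {f : ((Fin n → ℝ) × ℝ) → ℝ} (hf : ContDiff ℝ (⊤ : ℕ∞) f) (t : ℝ)
    (x : Fin n → ℝ) :
    HasFDerivAt (fun y => ∫ s in (0:ℝ)..t, f (y, s))
      (∫ s in (0:ℝ)..t,
        (fderiv ℝ f (x, s)).comp (ContinuousLinearMap.inl ℝ (Fin n → ℝ) ℝ)) x := by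
  have hdf : Continuous (fderiv ℝ f) := hf.continuous_fderiv (by simp)
  have hK : IsCompact (Metric.closedBall x 1 ×ˢ Set.uIcc (0:ℝ) t) :=
    (isCompact_closedBall _ _).prod isCompact_uIcc
  obtain ⟨C, hC⟩ := hK.exists_bound_of_continuousOn hdf.continuousOn
  have hslice : ∀ y : Fin n → ℝ, Continuous fun s => f (y, s) := fun y =>
    hf.continuous.comp (continuous_const.prodMk continuous_id)
  have hF'cont : Continuous fun s : ℝ =>
      (fderiv ℝ f (x, s)).comp (ContinuousLinearMap.inl ℝ (Fin n → ℝ) ℝ) :=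
    ((hdf.comp (continuous_const.prodMk continuous_id))).clm_comp continuous_const
  refine intervalIntegral.hasFDerivAt_integral_of_dominated_of_fderiv_le
    (F' := fun y s => (fderiv ℝ f (y, s)).comp (ContinuousLinearMap.inl ℝ (Fin n → ℝ) ℝ))
    (bound := fun _ => max C 0) (Metric.ball_mem_nhds x one_pos)
    (Filter.Eventually.of_forall fun y => (hslice y).aestronglyMeasurable)
    ((hslice x).intervalIntegrable 0 t)
    hF'cont.aestronglyMeasurable
    (Filter.Eventually.of_forall fun s hs => fun y hy => ?_)
    intervalIntegrable_const
    (Filter.Eventually.of_forall fun s _ => fun y _ => ?_)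
  · have hm : (y, s) ∈ Metric.closedBall x 1 ×ˢ Set.uIcc (0:ℝ) t :=
      ⟨Metric.ball_subset_closedBall hy, Set.uIoc_subset_uIcc hs⟩
    refine ContinuousLinearMap.opNorm_le_bound _ (le_max_right _ _) fun v => ?_
    have h1 : ‖(fderiv ℝ f (y, s)) (v, 0)‖ ≤ ‖fderiv ℝ f (y, s)‖ * ‖(v, (0:ℝ))‖ :=
      ContinuousLinearMap.le_opNorm _ _
    have h2 : ‖(v, (0:ℝ))‖ = ‖v‖ := by
      simp [Prod.norm_def]
    calc ‖((fderiv ℝ f (y, s)).comp (ContinuousLinearMap.inl ℝ (Fin n → ℝ) ℝ)) v‖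
        = ‖(fderiv ℝ f (y, s)) (v, 0)‖ := rfl
      _ ≤ ‖fderiv ℝ f (y, s)‖ * ‖v‖ := by rw [← h2]; exact h1
      _ ≤ max C 0 * ‖v‖ := by
          gcongr
          exact le_trans (hC _ hm) (le_max_left _ _)
  · exact ((hf.differentiable (by simp) (y, s)).hasFDerivAt).comp y (hasFDerivAt_prodMk_left y s)

lemma pd_integral_eq {f : ((Fin n → ℝ) × ℝ) → ℝ} (hf : ContDiff ℝ (⊤ : ℕ∞) f) (t : ℝ)
    (x : Fin n → ℝ) (i : Fin n) :
    pd i (fun y => ∫ s in (0:ℝ)..t, f (y, s)) x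
      = ∫ s in (0:ℝ)..t, fderiv ℝ f (x, s) (Pi.single i 1, 0) := by
  have hF'cont : Continuous fun s : ℝ =>
      (fderiv ℝ f (x, s)).comp (ContinuousLinearMap.inl ℝ (Fin n → ℝ) ℝ) :=
    (((hf.continuous_fderiv (by simp)).comp
      (continuous_const.prodMk continuous_id))).clm_comp continuous_const
  rw [pd, (pd_hasFDerivAt_integral hf t x).fderiv,
    ContinuousLinearMap.intervalIntegral_apply (hF'cont.intervalIntegrable 0 t)]
  simp [ContinuousLinearMap.comp_apply, ContinuousLinearMap.inl_apply]

end Param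

lemma pd_integral_sub {n : ℕ} {f : ((Fin n → ℝ) × ℝ) → ℝ} (hf : ContDiff ℝ (⊤ : ℕ∞) f) (t : ℝ)
    (x : Fin n → ℝ) (j : Fin n) :
    pd j (fun y => (∫ s in (0:ℝ)..t, f (y, s)) - t * f (y, 0)) x
      = (∫ s in (0:ℝ)..t, fderiv ℝ f (x, s) (Pi.single j 1, 0))
        - t * fderiv ℝ f (x, 0) (Pi.single j 1, 0) := by
  have h1 := pd_hasFDerivAt_integral hf t x
  have h2 : HasFDerivAt (fun z : Fin n → ℝ => f (z, 0))
      ((fderiv ℝ f (x, 0)).comp (ContinuousLinearMap.inl ℝ (Fin n → ℝ) ℝ)) x :=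
    ((hf.differentiable (by simp) (x, 0)).hasFDerivAt).comp x (hasFDerivAt_prodMk_left x 0)
  have h3 : HasFDerivAt (fun y : Fin n → ℝ => (∫ s in (0:ℝ)..t, f (y, s)) - t * f (y, 0))
      ((∫ s in (0:ℝ)..t, (fderiv ℝ f (x, s)).comp (ContinuousLinearMap.inl ℝ (Fin n → ℝ) ℝ))
        - t • ((fderiv ℝ f (x, 0)).comp (ContinuousLinearMap.inl ℝ (Fin n → ℝ) ℝ))) x :=
    h1.sub (h2.const_mul t)
  have hF'cont : Continuous fun s : ℝ =>
      (fderiv ℝ f (x, s)).comp (ContinuousLinearMap.inl ℝ (Fin n → ℝ) ℝ) :=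
    (((hf.continuous_fderiv (by simp)).comp (continuous_const.prodMk continuous_id))).clm_comp
      continuous_const
  rw [pd, h3.fderiv]
  simp only [ContinuousLinearMap.sub_apply, ContinuousLinearMap.smul_apply,
    ContinuousLinearMap.intervalIntegral_apply (hF'cont.intervalIntegrable 0 t)]
  simp [smul_eq_mul]

/-- Conversely, if G solves ∂ₜ G_{ij} = ∂_i∂_j log det G with G(0) = G₀ and
φ(x,t) = ∫₀ᵗ log(det G(x,s)/det G₀(x)) ds, then G(t) = G₀ − tB₀ + Hess φ with
B₀ = −Hess log det G₀, and φ solves the scalar equation with φ(·,0) = 0. -/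
theorem flow_gives_scalar_equation {n : ℕ}
    (G₀ : (Fin n → ℝ) → Matrix (Fin n) (Fin n) ℝ)
    (hG₀sm : ∀ i j, ContDiff ℝ (⊤ : ℕ∞) (fun x => G₀ x i j))
    (hG₀pos : ∀ x, (G₀ x).PosDef)
    (G : (Fin n → ℝ) → ℝ → Matrix (Fin n) (Fin n) ℝ)
    (hsm : ∀ i j, ContDiff ℝ (⊤ : ℕ∞) (fun p : (Fin n → ℝ) × ℝ => G p.1 p.2 i j))
    (hpos : ∀ x t, (G x t).PosDef)
    (hinit : ∀ x, G x 0 = G₀ x)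
    (hflow : ∀ (x : Fin n → ℝ) (t : ℝ) (i j : Fin n),
      deriv (fun s => G x s i j) t = pd i (pd j (fun y => Real.log (G y t).det)) x)
    (B₀ : (Fin n → ℝ) → Matrix (Fin n) (Fin n) ℝ)
    (hB₀ : ∀ x i j, B₀ x i j = - pd i (pd j (fun y => Real.log (G₀ y).det)) x)
    (φ : (Fin n → ℝ) → ℝ → ℝ)
    (hφ : ∀ x t, φ x t = ∫ s in (0 : ℝ)..t, Real.log ((G x s).det / (G₀ x).det)) :
    (∀ x, φ x 0 = 0) ∧
    (∀ (x : Fin n → ℝ) (t : ℝ) (i j : Fin n),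
      G x t i j = G₀ x i j - t * B₀ x i j + pd i (pd j (fun y => φ y t)) x) ∧
    (∀ (x : Fin n → ℝ) (t : ℝ),
      deriv (fun s => φ x s) t = Real.log ((G x t).det / (G₀ x).det)) := by
  set L : (Fin n → ℝ) × ℝ → ℝ := fun p => Real.log (G p.1 p.2).det with hLdef
  have hL : ContDiff ℝ (⊤ : ℕ∞) L :=
    aux_contDiff_log_det (fun p : (Fin n → ℝ) × ℝ => G p.1 p.2) hsm (fun p : (Fin n → ℝ) × ℝ => hpos p.1 p.2)
  have hkey : ∀ (y : Fin n → ℝ) (s : ℝ),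
      Real.log ((G y s).det / (G₀ y).det) = L (y, s) - L (y, 0) := by
    intro y s
    rw [Real.log_div (hpos y s).det_pos.ne' (hG₀pos y).det_pos.ne']
    simp only [hLdef, hinit y]
  have hLcont : Continuous L := hL.continuous
  have hcont_slice : ∀ y : Fin n → ℝ, Continuous fun s => L (y, s) := fun y =>
    hLcont.comp (continuous_const.prodMk continuous_id)
  have part1 : ∀ x, φ x 0 = 0 := fun x => by rw [hφ, intervalIntegral.integral_same]
  have part3 : ∀ (x : Fin n → ℝ) (t : ℝ),
      deriv (fun s => φ x s) t = Real.log ((G x t).det / (G₀ x).det) := by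
    intro x t
    have hg : Continuous fun s => Real.log ((G x s).det / (G₀ x).det) := by
      have heq : (fun s => Real.log ((G x s).det / (G₀ x).det))
          = fun s => L (x, s) - L (x, 0) := funext fun s => hkey x s
      rw [heq]
      exact (hcont_slice x).sub continuous_const
    have hfun : (fun s => φ x s)
        = fun u => ∫ s in (0:ℝ)..u, Real.log ((G x s).det / (G₀ x).det) :=
      funext fun u => hφ x u
    rw [hfun]
    exact Continuous.deriv_integral _ hg 0 t
  refine ⟨part1, ?_, part3⟩
  intro x t i j
  set Dj : (Fin n → ℝ) × ℝ → ℝ := fun p => fderiv ℝ L p (Pi.single j 1, 0) with hDjdef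
  have hDj : ContDiff ℝ (⊤ : ℕ∞) Dj := (hL.fderiv_right (by simp)).clm_apply contDiff_const
  -- Step A : formula for φ
  have hA : ∀ (y : Fin n → ℝ) (u : ℝ),
      φ y u = (∫ s in (0:ℝ)..u, L (y, s)) - u * L (y, 0) := by
    intro y u
    rw [hφ]
    have h1 : (fun s => Real.log ((G y s).det / (G₀ y).det))
        = fun s => L (y, s) - L (y, 0) := funext fun s => hkey y s
    rw [h1, intervalIntegral.integral_sub ((hcont_slice y).intervalIntegrable 0 u)
      intervalIntegrable_const, intervalIntegral.integral_const]
    simp [smul_eq_mul]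
  -- identify every s-derivative of G with second partials of Dj
  have hDs : ∀ s : ℝ, deriv (fun u => G x u i j) s = fderiv ℝ Dj (x, s) (Pi.single i 1, 0) := by
    intro s
    rw [hflow x s i j]
    have h1 : pd j (fun y => Real.log (G y s).det) = fun y => Dj (y, s) := by
      funext y
      exact pd_slice (hL.differentiable (by simp)) s j y
    rw [h1]
    exact pd_slice (hDj.differentiable (by simp)) s i x
  have hDscont : Continuous fun s : ℝ => fderiv ℝ Dj (x, s) (Pi.single i 1, 0) :=
    ((hDj.continuous_fderiv (by simp)).comp (continuous_const.prodMk continuous_id)).clm_apply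
      continuous_const
  -- FTC
  have hftc : (∫ s in (0:ℝ)..t, fderiv ℝ Dj (x, s) (Pi.single i 1, 0))
      = G x t i j - G₀ x i j := by
    have hdiff : ∀ s ∈ Set.uIcc (0:ℝ) t, DifferentiableAt ℝ (fun u => G x u i j) s := fun s _ =>
      (((hsm i j).comp ((contDiff_const).prodMk contDiff_id)).differentiable (by simp)) s
    have hder : deriv (fun u => G x u i j) = fun s => fderiv ℝ Dj (x, s) (Pi.single i 1, 0) :=
      funext hDs
    have h2 := intervalIntegral.integral_deriv_eq_sub hdiff
      (by rw [hder]; exact hDscont.intervalIntegrable 0 t)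
    rw [hder] at h2
    rw [h2, hinit x]
  -- B₀ identification
  have hB0 : B₀ x i j = - fderiv ℝ Dj (x, 0) (Pi.single i 1, 0) := by
    rw [hB₀ x i j]
    congr 1
    have h1 : (fun y => Real.log (G₀ y).det) = fun y => L (y, 0) := by
      funext y
      rw [← hinit y]
    rw [h1]
    have h2 : pd j (fun y => L (y, 0)) = fun y => Dj (y, 0) :=
      funext fun y => pd_slice (hL.differentiable (by simp)) 0 j y
    rw [h2]
    exact pd_slice (hDj.differentiable (by simp)) 0 i x
  -- main computation of the Hessian of φ
  have e1 : pd i (pd j (fun y => φ y t)) x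
      = pd i (fun y => (∫ s in (0:ℝ)..t, Dj (y, s)) - t * Dj (y, 0)) x := by
    congr 1
    funext y
    rw [show (fun y => φ y t) = fun z => (∫ s in (0:ℝ)..t, L (z, s)) - t * L (z, 0) from
      funext fun z => hA z t]
    exact pd_integral_sub hL t y j
  have hpd : pd i (pd j (fun y => φ y t)) x
      = (G x t i j - G₀ x i j) - t * fderiv ℝ Dj (x, 0) (Pi.single i 1, 0) := by
    rw [e1, pd_integral_sub hDj t x i, hftc]
  rw [hpd, hB0]
  ring
end

section
/- Maximum-principle lemma: Let (M,g) be a complete Riemannian manifold admitting a smooth proper exhaustion function ρ ≥ 1 with L ρ ≤ C₂ for a uniformly elliptic operator L (comparable to the Laplacian of g). Let f : M × [0,T] → ℝ be smooth, bounded above, with f(·,0) ≤ 0 and (∂_t − L) f ≤ 0 on the set {f > 0}. Then f ≤ 0 on M × [0,T]. -/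
open scoped BigOperators

lemma trace_nonneg_of_psd {m : ℕ} {M : Matrix (Fin m) (Fin m) ℝ} (h : M.PosSemidef) :
    0 ≤ M.trace := by
  rw [Matrix.trace]
  refine Finset.sum_nonneg fun i _ => ?_
  have := h.diag_nonneg (i := i)
  simpa using this

lemma pd_contDiff {n : ℕ} (j : Fin n) {u : (Fin n → ℝ) → ℝ} (hu : ContDiff ℝ (⊤ : ℕ∞) u) :
    ContDiff ℝ (⊤ : ℕ∞) (pd j u) := by
  have h1 : ContDiff ℝ (⊤ : ℕ∞) (fderiv ℝ u) := hu.fderiv_right (by simp)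
  exact h1.clm_apply contDiff_const

lemma pd_pd_eq {n : ℕ} {u : (Fin n → ℝ) → ℝ} (hu : ContDiff ℝ (⊤ : ℕ∞) u) (x₀ : Fin n → ℝ)
    (i j : Fin n) :
    pd i (pd j u) x₀ = fderiv ℝ (fderiv ℝ u) x₀ (Pi.single i 1) (Pi.single j 1) := by
  have h1 : ContDiff ℝ (⊤ : ℕ∞) (fderiv ℝ u) := hu.fderiv_right (by simp)
  have h2 : HasFDerivAt (fderiv ℝ u) (fderiv ℝ (fderiv ℝ u) x₀) x₀ :=
    (h1.differentiable (by simp) x₀).hasFDerivAt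
  have h3 : HasFDerivAt (fun y => fderiv ℝ u y (Pi.single j 1))
      ((fderiv ℝ (fderiv ℝ u) x₀).flip (Pi.single j 1)) x₀ := by
    simpa using h2.clm_apply (hasFDerivAt_const (Pi.single j 1) x₀)
  show fderiv ℝ (fun y => fderiv ℝ u y (Pi.single j 1)) x₀ (Pi.single i 1) = _
  rw [h3.fderiv]
  rfl


lemma second_deriv_nonpos_at_max {φ : ℝ → ℝ} (hφ : ContDiff ℝ (⊤ : ℕ∞) φ)
    (hmax : ∀ s, φ s ≤ φ 0) : deriv (deriv φ) 0 ≤ 0 := by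
  by_contra h
  push_neg at h
  -- deriv φ 0 = 0
  have hd1 : Differentiable ℝ φ := hφ.differentiable (by simp)
  have hd0 : deriv φ 0 = 0 := by
    have : IsLocalMax φ 0 := IsMaxOn.isLocalMax (fun s _ => hmax s) Filter.univ_mem
    exact this.deriv_eq_zero
  have hd2 : HasDerivAt (deriv φ) (deriv (deriv φ) 0) 0 :=
    ((contDiff_infty_iff_deriv.mp (hφ.of_le (by simp))).2.differentiable (by simp) 0).hasDerivAt
  -- slope of deriv φ tends to deriv² > 0, so deriv φ > 0 on a right nbhd
  have hslope := hasDerivAt_iff_tendsto_slope.1 hd2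
  have hpos : ∀ᶠ s in nhdsWithin 0 (Set.Ioi 0), 0 < deriv φ s := by
    have h2 : Filter.Tendsto (slope (deriv φ) 0) (nhdsWithin 0 (Set.Ioi 0)) (nhds (deriv (deriv φ) 0)) :=
      hslope.mono_left (nhdsWithin_mono 0 (fun x hx => Set.mem_of_mem_of_subset hx (by
        intro y hy; simp at hy ⊢; exact ne_of_gt hy)))
    have h3 : ∀ᶠ s in nhdsWithin 0 (Set.Ioi 0), 0 < slope (deriv φ) 0 s :=
      h2.eventually (eventually_gt_nhds h)
    filter_upwards [h3, self_mem_nhdsWithin] with s hs hs'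
    have : slope (deriv φ) 0 s = deriv φ s / s := by simp [slope, hd0, div_eq_inv_mul]
    rw [this] at hs
    exact (div_pos_iff.1 hs).elim (fun h => h.1) (fun h => absurd h.2 (not_lt.2 (le_of_lt hs')))
  rw [eventually_nhdsWithin_iff] at hpos
  obtain ⟨δ, hδpos, hδ⟩ := Metric.eventually_nhds_iff.1 hpos
  have hmono : StrictMonoOn φ (Set.Icc 0 (δ/2)) := by
    apply strictMonoOn_of_deriv_pos (convex_Icc _ _) (hφ.continuous.continuousOn)
    intro s hs
    rw [interior_Icc] at hs
    refine hδ (by rw [Real.dist_eq]; rw [sub_zero]; rw [abs_of_pos hs.1]; linarith [hs.2]) hs.1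
  have := hmono (Set.mem_Icc.2 ⟨le_refl 0, by positivity⟩)
    (Set.mem_Icc.2 ⟨by positivity, le_refl _⟩) (by positivity)
  exact absurd (hmax (δ/2)) (not_le.2 this)


lemma slice_second_deriv {n : ℕ} {u : (Fin n → ℝ) → ℝ} (hu : ContDiff ℝ (⊤ : ℕ∞) u)
    (x₀ v : Fin n → ℝ) :
    deriv (deriv (fun s : ℝ => u (x₀ + s • v))) 0 = fderiv ℝ (fderiv ℝ u) x₀ v v := by
  have hud : Differentiable ℝ u := hu.differentiable (by simp)
  have hG : ContDiff ℝ (⊤ : ℕ∞) (fderiv ℝ u) := hu.fderiv_right (by simp)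
  have hline : ∀ s : ℝ, HasDerivAt (fun s : ℝ => x₀ + s • v) v s := by
    intro s
    simpa using ((hasDerivAt_id s).smul_const v).const_add x₀
  have hd1 : ∀ s : ℝ, deriv (fun s : ℝ => u (x₀ + s • v)) s = fderiv ℝ u (x₀ + s • v) v := by
    intro s
    exact (((hud (x₀ + s • v)).hasFDerivAt).comp_hasDerivAt s (hline s)).deriv
  rw [funext hd1]
  have h2 : HasDerivAt (fun s : ℝ => fderiv ℝ u (x₀ + s • v))
      (fderiv ℝ (fderiv ℝ u) x₀ v) 0 := by
    have := ((hG.differentiable (by simp) (x₀ + (0:ℝ) • v)).hasFDerivAt).comp_hasDerivAt 0 (hline 0)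
    simpa [Function.comp_def] using this
  have h3 : HasDerivAt (fun s : ℝ => fderiv ℝ u (x₀ + s • v) v)
      (fderiv ℝ (fderiv ℝ u) x₀ v v) 0 := by
    simpa using h2.clm_apply (hasDerivAt_const (0:ℝ) v)
  exact h3.deriv

lemma clm_bilin_expand {n : ℕ} (B : (Fin n → ℝ) →L[ℝ] (Fin n → ℝ) →L[ℝ] ℝ) (v w : Fin n → ℝ) :
    B v w = ∑ i, ∑ j, v i * w j * B (Pi.single i 1) (Pi.single j 1) := by
  have hv : v = ∑ i, v i • (Pi.single i 1 : Fin n → ℝ) := by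
    funext j; simp [Pi.single_apply, Finset.sum_apply]
  have hw : w = ∑ j, w j • (Pi.single j 1 : Fin n → ℝ) := by
    funext j; simp [Pi.single_apply, Finset.sum_apply]
  conv_lhs => rw [hv, hw]
  rw [map_sum]
  simp only [map_smul, ContinuousLinearMap.coe_sum', ContinuousLinearMap.coe_smul',
    Finset.sum_apply, Pi.smul_apply, map_sum, smul_eq_mul]
  simp only [Finset.mul_sum]
  rw [Finset.sum_comm]
  refine Finset.sum_congr rfl fun i _ => Finset.sum_congr rfl fun j _ => by ring

open scoped MatrixOrder in
lemma hess_sum_nonpos {n : ℕ} {u : (Fin n → ℝ) → ℝ} (hu : ContDiff ℝ (⊤ : ℕ∞) u)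
    {x₀ : Fin n → ℝ} (hmax : ∀ y, u y ≤ u x₀) {A : Matrix (Fin n) (Fin n) ℝ}
    (hA : A.PosDef) : ∑ i, ∑ j, A i j * pd i (pd j u) x₀ ≤ 0 := by
  set B := fderiv ℝ (fderiv ℝ u) x₀ with hB
  -- quadratic form nonpositive
  have hq : ∀ v : Fin n → ℝ, B v v ≤ 0 := by
    intro v
    rw [← slice_second_deriv hu x₀ v]
    refine second_deriv_nonpos_at_max ?_ ?_
    · exact hu.comp ((contDiff_const.add (contDiff_id.smul contDiff_const)))
    · intro s; simpa using hmax (x₀ + s • v)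
  -- symmetry
  have hsymm : ∀ v w, B v w = B w v := by
    intro v w
    exact second_derivative_symmetric (fun y => (hu.differentiable (by simp) y).hasFDerivAt)
      (((hu.fderiv_right (m := (⊤ : ℕ∞)) (by simp)).differentiable (by simp) x₀).hasFDerivAt) v w
  -- the negated Hessian matrix
  set N : Matrix (Fin n) (Fin n) ℝ :=
    Matrix.of (fun i j => - B (Pi.single i 1) (Pi.single j 1)) with hN
  have hNpsd : N.PosSemidef := by
    rw [Matrix.posSemidef_iff_dotProduct_mulVec]
    constructor
    · ext i j
      simp [Matrix.conjTranspose_apply, hN, hsymm (Pi.single i 1) (Pi.single j 1)]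
    · intro x
      have := hq x
      rw [clm_bilin_expand] at this
      simp only [dotProduct, Matrix.mulVec, star_trivial, hN, Matrix.of_apply,
        Finset.mul_sum]
      have heq : (∑ i, ∑ j, x i * (-(B (Pi.single i 1)) (Pi.single j 1) * x j))
          = -∑ i, ∑ j, x i * x j * (B (Pi.single i 1)) (Pi.single j 1) := by
        rw [← Finset.sum_neg_distrib]
        refine Finset.sum_congr rfl fun i _ => ?_
        rw [← Finset.sum_neg_distrib]
        refine Finset.sum_congr rfl fun j _ => by ring
      rw [heq]
      linarith
  -- trace inequality
  have htr : 0 ≤ (A * N).trace := by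
    set s := CFC.sqrt A with hs
    have h1 : A * N = s * s * N := by rw [CFC.sqrt_mul_sqrt_self A (Matrix.nonneg_iff_posSemidef.2 hA.posSemidef)]
    have h2 : (s * N * s).trace = (s * s * N).trace := Matrix.trace_mul_cycle s N s
    have h3 : (s.conjTranspose * N * s).PosSemidef := hNpsd.conjTranspose_mul_mul_same s
    rw [(Matrix.nonneg_iff_posSemidef.1 (CFC.sqrt_nonneg A)).isHermitian.eq] at h3
    rw [h1, ← h2]
    exact trace_nonneg_of_psd h3
  have hexp : ∑ i, ∑ j, A i j * pd i (pd j u) x₀ = -(A * N).trace := by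
    rw [Matrix.trace]
    simp only [Matrix.diag_apply, Matrix.mul_apply, hN, Matrix.of_apply]
    rw [← Finset.sum_neg_distrib]
    rw [Finset.sum_comm]
    refine Finset.sum_congr rfl fun i _ => ?_
    rw [← Finset.sum_neg_distrib]
    refine Finset.sum_congr rfl fun j _ => ?_
    rw [pd_pd_eq hu, ← hB]
    have hAij : A j i = A i j := by simpa using hA.1.apply i j
    rw [hAij]
    ring
  rw [hexp]
  linarith


lemma right_max_deriv_nonneg {g : ℝ → ℝ} {d T t₀ : ℝ} (hd : HasDerivAt g d t₀)
    (ht₀ : 0 < t₀) (hT : t₀ ≤ T) (hmax : ∀ s ∈ Set.Icc 0 T, g s ≤ g t₀) : 0 ≤ d := by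
  have hloc : IsLocalMaxOn g (Set.Icc 0 T) t₀ :=
    Filter.eventually_of_mem self_mem_nhdsWithin fun x hx => hmax x hx
  have hcone : (-t₀) ∈ posTangentConeAt (Set.Icc 0 T) t₀ := by
    apply mem_posTangentConeAt_of_segment_subset
    have : segment ℝ t₀ (t₀ + -t₀) = Set.Icc 0 t₀ := by
      rw [add_neg_cancel, segment_symm, segment_eq_Icc (le_of_lt ht₀)]
    rw [this]
    exact Set.Icc_subset_Icc le_rfl hT
  have := hloc.hasFDerivWithinAt_nonpos hd.hasFDerivAt.hasFDerivWithinAt hcone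
  simp only [ContinuousLinearMap.smulRight_apply, ContinuousLinearMap.one_apply,
    ContinuousLinearMap.toSpanSingleton_apply, smul_eq_mul] at this
  nlinarith

lemma pd_pd_sub {n : ℕ} (i j : Fin n) {φ ψ : (Fin n → ℝ) → ℝ} (hφ : ContDiff ℝ (⊤ : ℕ∞) φ)
    (hψ : ContDiff ℝ (⊤ : ℕ∞) ψ) (ε : ℝ) (x : Fin n → ℝ) :
    pd i (pd j (fun y => φ y - ε * ψ y)) x = pd i (pd j φ) x - ε * pd i (pd j ψ) x := by
  have h1 : pd j (fun y => φ y - ε * ψ y) = fun y => pd j φ y - ε * pd j ψ y := by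
    funext y
    simp only [pd]
    rw [fderiv_fun_sub (hφ.differentiable (by simp) y)
      (((hψ.differentiable (by simp) y)).const_mul ε),
      fderiv_const_mul (hψ.differentiable (by simp) y)]
    simp
  rw [h1]
  show fderiv ℝ (fun y => pd j φ y - ε * pd j ψ y) x (Pi.single i 1) = _
  rw [fderiv_fun_sub ((pd_contDiff j hφ).differentiable (by simp) x)
      ((((pd_contDiff j hψ).differentiable (by simp) x)).const_mul ε),
    fderiv_const_mul ((pd_contDiff j hψ).differentiable (by simp) x)]
  simp [pd]


/-- Maximum-principle lemma: if ρ ≥ 1 is a smooth proper exhaustion function with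
Lρ ≤ C₂ for the (time-dependent, positive definite) elliptic operator
L u = Σ aⁱʲ ∂_i∂_j u, and f is smooth, bounded above, nonpositive at t = 0, and
satisfies (∂ₜ − L) f ≤ 0 wherever f > 0, then f ≤ 0 on M × [0,T]. -/
theorem maximum_principle_noncompact {n : ℕ} (T C₂ : ℝ) (hT : 0 < T) (hC₂ : 0 < C₂)
    (a : (Fin n → ℝ) → ℝ → Matrix (Fin n) (Fin n) ℝ)
    (ha : ∀ x t, (a x t).PosDef)
    (ρ : (Fin n → ℝ) → ℝ) (hρsm : ContDiff ℝ (⊤ : ℕ∞) ρ) (hρ1 : ∀ x, 1 ≤ ρ x)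
    (hρproper : Filter.Tendsto ρ (Filter.cocompact (Fin n → ℝ)) Filter.atTop)
    (hLρ : ∀ (x : Fin n → ℝ) (t : ℝ), t ∈ Set.Icc 0 T →
      ∑ i, ∑ j, a x t i j * pd i (pd j ρ) x ≤ C₂)
    (f : (Fin n → ℝ) → ℝ → ℝ)
    (hfsm : ContDiff ℝ (⊤ : ℕ∞) (fun p : (Fin n → ℝ) × ℝ => f p.1 p.2))
    (hbd : BddAbove (Set.range fun p : (Fin n → ℝ) × ℝ => f p.1 p.2))
    (hinit : ∀ x, f x 0 ≤ 0)
    (hsub : ∀ (x : Fin n → ℝ) (t : ℝ), t ∈ Set.Icc 0 T → 0 < f x t →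
      deriv (fun s => f x s) t
        - ∑ i, ∑ j, a x t i j * pd i (pd j (fun y => f y t)) x ≤ 0) :
    ∀ (x : Fin n → ℝ) (t : ℝ), t ∈ Set.Icc 0 T → f x t ≤ 0 := by
  have key : ∀ ε > (0:ℝ), ∀ (x : Fin n → ℝ) (t : ℝ), t ∈ Set.Icc 0 T →
      f x t ≤ ε * (ρ x + (C₂ + 1) * t) := by
    intro ε hε
    by_contra hcon
    push_neg at hcon
    obtain ⟨x₁, t₁, ht₁, hx₁⟩ := hcon
    obtain ⟨Bd, hBd⟩ := hbd
    have hBd' : ∀ y s, f y s ≤ Bd := fun y s => hBd (Set.mem_range_self ((y, s) : _ × _))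
    set R : ℝ := max (ρ x₁) (Bd / ε) with hR
    have hK₁cl : IsClosed (ρ ⁻¹' Set.Iic R) := isClosed_Iic.preimage hρsm.continuous
    obtain ⟨S, hScomp, hS⟩ : ∃ S, IsCompact S ∧ Sᶜ ⊆ {y | R + 1 ≤ ρ y} := by
      have h := hρproper.eventually (Filter.eventually_ge_atTop (R + 1))
      rw [Filter.eventually_iff, Filter.mem_cocompact] at h
      obtain ⟨S, h1, h2⟩ := h
      exact ⟨S, h1, h2⟩
    have hK₁ : IsCompact (ρ ⁻¹' Set.Iic R) := by
      refine hScomp.of_isClosed_subset hK₁cl (fun y hy => ?_)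
      by_contra hyS
      have h2 := hS hyS
      simp only [Set.mem_preimage, Set.mem_Iic] at hy
      simp only [Set.mem_setOf_eq] at h2
      linarith
    set H : ((Fin n → ℝ) × ℝ) → ℝ :=
      fun p => f p.1 p.2 - ε * (ρ p.1 + (C₂ + 1) * p.2) with hH
    have hHcont : Continuous H :=
      hfsm.continuous.sub (continuous_const.mul
        ((hρsm.continuous.comp continuous_fst).add (continuous_const.mul continuous_snd)))
    have hx₁K : (x₁, t₁) ∈ (ρ ⁻¹' Set.Iic R) ×ˢ Set.Icc (0:ℝ) T :=
      ⟨by simp only [Set.mem_preimage, Set.mem_Iic, hR]; exact le_max_left _ _, ht₁⟩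
    obtain ⟨⟨x₀, t₀⟩, hp₀K, hp₀max⟩ :=
      (hK₁.prod isCompact_Icc).exists_isMaxOn ⟨(x₁, t₁), hx₁K⟩ hHcont.continuousOn
    have hp₀max' : ∀ p ∈ (ρ ⁻¹' Set.Iic R) ×ˢ Set.Icc (0:ℝ) T, H p ≤ H (x₀, t₀) :=
      fun p hp => hp₀max hp
    have hglob : ∀ y, ∀ s ∈ Set.Icc (0:ℝ) T, H (y, s) ≤ H (x₀, t₀) := by
      intro y s hs
      by_cases hy : ρ y ≤ R
      · exact hp₀max' (y, s) ⟨hy, hs⟩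
      · have hρy : R ≤ ρ y := le_of_lt (lt_of_not_ge hy)
        have hεR : Bd ≤ ε * R := by
          have : Bd / ε ≤ R := by rw [hR]; exact le_max_right _ _
          rw [div_le_iff₀ hε] at this
          linarith [this]
        have h1 : H (y, s) ≤ 0 := by
          have hb := hBd' y s
          have hs0 : 0 ≤ s := hs.1
          have e1 : ε * R ≤ ε * ρ y := mul_le_mul_of_nonneg_left hρy hε.le
          have e2 : 0 ≤ ε * ((C₂ + 1) * s) :=
            mul_nonneg hε.le (mul_nonneg (by linarith) hs0)
          have e3 : ε * (ρ y + (C₂ + 1) * s) = ε * ρ y + ε * ((C₂ + 1) * s) := by ring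
          simp only [hH]
          linarith
        have h2 : 0 < H (x₁, t₁) := by simp only [hH]; linarith
        have h3 := hp₀max' (x₁, t₁) hx₁K
        linarith
    have hpos : 0 < H (x₀, t₀) :=
      lt_of_lt_of_le (by simp only [hH]; linarith) (hp₀max' (x₁, t₁) hx₁K)
    have ht₀mem : t₀ ∈ Set.Icc (0:ℝ) T := hp₀K.2
    have ht₀pos : 0 < t₀ := by
      rcases lt_or_eq_of_le ht₀mem.1 with h | h
      · exact h
      · exfalso
        have h1 := hinit x₀
        have h2 := hρ1 x₀
        have h3 : H (x₀, t₀) ≤ 0 := by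
          simp only [hH, ← h]
          nlinarith
        linarith
    have hf₀pos : 0 < f x₀ t₀ := by
      have h1 := hρ1 x₀; have h2 := ht₀mem.1
      simp only [hH] at hpos
      have e4 : 0 ≤ ε * (ρ x₀ + (C₂ + 1) * t₀) :=
        mul_nonneg hε.le (by nlinarith)
      linarith
    have hgd : Differentiable ℝ (fun s => f x₀ s) :=
      (hfsm.comp (contDiff_const.prodMk contDiff_id)).differentiable (by simp)
    have htime : ε * (C₂ + 1) ≤ deriv (fun s => f x₀ s) t₀ := by
      have hG : HasDerivAt (fun s => f x₀ s - ε * (ρ x₀ + (C₂ + 1) * s))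
          (deriv (fun s => f x₀ s) t₀ - ε * (C₂ + 1)) t₀ := by
        have h1 : HasDerivAt (fun s => f x₀ s) (deriv (fun s => f x₀ s) t₀) t₀ :=
          (hgd t₀).hasDerivAt
        have h2 : HasDerivAt (fun s : ℝ => ε * (ρ x₀ + (C₂ + 1) * s)) (ε * (C₂ + 1)) t₀ := by
          simpa using (((hasDerivAt_id t₀).const_mul (C₂ + 1)).const_add (ρ x₀)).const_mul ε
        exact h1.sub h2
      have h3 := right_max_deriv_nonneg hG ht₀pos ht₀mem.2 (fun s hs => hglob x₀ s hs)
      linarith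
    have hft₀ : ContDiff ℝ (⊤ : ℕ∞) (fun y => f y t₀) := hfsm.comp (contDiff_id.prodMk contDiff_const)
    have huc : ContDiff ℝ (⊤ : ℕ∞) (fun y => f y t₀ - ε * ρ y) := hft₀.sub (contDiff_const.mul hρsm)
    have humax : ∀ y, (fun y => f y t₀ - ε * ρ y) y ≤ (fun y => f y t₀ - ε * ρ y) x₀ := by
      intro y
      have h1 := hglob y t₀ ht₀mem
      simp only [hH] at h1
      simp only
      linarith
    have hhess := hess_sum_nonpos huc humax (ha x₀ t₀)
    have hsplit : ∀ i j : Fin n, pd i (pd j (fun y => f y t₀ - ε * ρ y)) x₀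
        = pd i (pd j (fun y => f y t₀)) x₀ - ε * pd i (pd j ρ) x₀ :=
      fun i j => pd_pd_sub i j hft₀ hρsm ε x₀
    have hLf : ∑ i, ∑ j, a x₀ t₀ i j * pd i (pd j (fun y => f y t₀)) x₀ ≤ ε * C₂ := by
      have e1 : ∑ i, ∑ j, a x₀ t₀ i j * pd i (pd j (fun y => f y t₀)) x₀
          = (∑ i, ∑ j, a x₀ t₀ i j * pd i (pd j (fun y => f y t₀ - ε * ρ y)) x₀)
            + ε * ∑ i, ∑ j, a x₀ t₀ i j * pd i (pd j ρ) x₀ := by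
        rw [Finset.mul_sum, ← Finset.sum_add_distrib]
        refine Finset.sum_congr rfl fun i _ => ?_
        rw [Finset.mul_sum, ← Finset.sum_add_distrib]
        refine Finset.sum_congr rfl fun j _ => ?_
        rw [hsplit i j]; ring
      rw [e1]
      have h4 := hLρ x₀ t₀ ht₀mem
      have hεC : ε * ∑ i, ∑ j, a x₀ t₀ i j * pd i (pd j ρ) x₀ ≤ ε * C₂ :=
        mul_le_mul_of_nonneg_left h4 (le_of_lt hε)
      linarith
    have h5 := hsub x₀ t₀ ht₀mem hf₀pos
    linarith
  intro x t ht
  by_contra hc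
  push_neg at hc
  have hM : 0 < ρ x + (C₂ + 1) * t := by nlinarith [hρ1 x, ht.1, hC₂]
  have h6 := key (f x t / (2 * (ρ x + (C₂ + 1) * t))) (by positivity) x t ht
  rw [div_mul_eq_mul_div] at h6
  have e5 : f x t * (ρ x + (C₂ + 1) * t) / (2 * (ρ x + (C₂ + 1) * t)) = f x t / 2 := by
    field_simp
  rw [e5] at h6
  linarith
end

section
/- Let φ solve ∂_t φ = log(det g(t)/det g₀) along the flow, set ψ̇ = ∂_t φ, and define Ψ = t φ̇ − φ − n t. Then along the flow g(t) = g₀ − tβ(g₀) + ∇dφ with ∂_t g = −β(g), one has the evolution identity (∂_t − L_g) Ψ = −tr_g g₀, where L_g f = tr_g ∇df and β_{ij}(g) = −∂_i∂_j log det g in affine coordinates. -/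
open scoped BigOperators

namespace EvoAux

open Matrix MeasureTheory

variable {n : ℕ}

theorem hasFDerivAt_slice {E : Type*} [NormedAddCommGroup E] [NormedSpace ℝ E]
    {F : E × ℝ → ℝ} {L : E × ℝ →L[ℝ] ℝ} {x : E} {c : ℝ}
    (hF : HasFDerivAt F L (x, c)) :
    HasFDerivAt (fun y => F (y, c)) (L.comp (ContinuousLinearMap.inl ℝ E ℝ)) x :=
  hF.comp x (hasFDerivAt_prodMk_left x c)

/-- The partial derivative in the `j`-th space direction, as a function on space-time. -/
noncomputable def pdx (j : Fin n) (F : (Fin n → ℝ) × ℝ → ℝ) : (Fin n → ℝ) × ℝ → ℝ :=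
  fun p => fderiv ℝ F p (Pi.single j 1, 0)

theorem contDiff_pdx {F : (Fin n → ℝ) × ℝ → ℝ} (hF : ContDiff ℝ (⊤ : ℕ∞) F) (j : Fin n) :
    ContDiff ℝ (⊤ : ℕ∞) (pdx j F) :=
  (hF.fderiv_right (by simp)).clm_apply contDiff_const

theorem pd_slice {F : (Fin n → ℝ) × ℝ → ℝ} (hF : ContDiff ℝ (⊤ : ℕ∞) F) (i : Fin n) (x : Fin n → ℝ)
    (c : ℝ) : pd i (fun y => F (y, c)) x = pdx i F (x, c) := by
  have h := hasFDerivAt_slice ((hF.differentiable (by simp)) (x, c)).hasFDerivAt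
  rw [pd, h.fderiv]
  simp [pdx]

theorem pd_pd_slice {F : (Fin n → ℝ) × ℝ → ℝ} (hF : ContDiff ℝ (⊤ : ℕ∞) F) (i j : Fin n)
    (x : Fin n → ℝ) (c : ℝ) :
    pd i (pd j (fun y => F (y, c))) x = pdx i (pdx j F) (x, c) := by
  have h1 : pd j (fun y => F (y, c)) = fun y => pdx j F (y, c) :=
    funext fun y => pd_slice hF j y c
  rw [h1, pd_slice (contDiff_pdx hF j) i x c]

theorem pdx_sub_comp {F : (Fin n → ℝ) × ℝ → ℝ} (hF : ContDiff ℝ (⊤ : ℕ∞) F) (j : Fin n) :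
    pdx j (fun p => F p - F (p.1, 0)) = fun p => pdx j F p - pdx j F (p.1, 0) := by
  funext p
  have hdF := hF.differentiable (by simp)
  set κ : ((Fin n → ℝ) × ℝ) →L[ℝ] ((Fin n → ℝ) × ℝ) :=
    (ContinuousLinearMap.inl ℝ (Fin n → ℝ) ℝ).comp (ContinuousLinearMap.fst ℝ (Fin n → ℝ) ℝ)
      with hκ
  have hκap : ∀ q : (Fin n → ℝ) × ℝ, κ q = (q.1, 0) := fun q => rfl
  have hcomp : ∀ q, HasFDerivAt (fun p : (Fin n → ℝ) × ℝ => F (p.1, 0))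
      ((fderiv ℝ F (q.1, 0)).comp κ) q := by
    intro q
    have := ((hdF (q.1, 0)).hasFDerivAt).comp q κ.hasFDerivAt
    exact this
  have hsub : HasFDerivAt (fun p : (Fin n → ℝ) × ℝ => F p - F (p.1, 0))
      (fderiv ℝ F p - (fderiv ℝ F (p.1, 0)).comp κ) p :=
    ((hdF p).hasFDerivAt).sub (hcomp p)
  rw [pdx, hsub.fderiv]
  simp [pdx, hκap]

theorem pd_sub {f h : (Fin n → ℝ) → ℝ} {y : Fin n → ℝ} (j : Fin n)
    (hf : DifferentiableAt ℝ f y) (hh : DifferentiableAt ℝ h y) :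
    pd j (fun z => f z - h z) y = pd j f y - pd j h y := by
  rw [pd, fderiv_fun_sub hf hh]; rfl

theorem pd_sub_const {f : (Fin n → ℝ) → ℝ} {y : Fin n → ℝ} (j : Fin n) (c : ℝ) :
    pd j (fun z => f z - c) y = pd j f y := by
  rw [pd, fderiv_sub_const]; rfl

theorem pd_const_mul {f : (Fin n → ℝ) → ℝ} {y : Fin n → ℝ} (j : Fin n) (c : ℝ)
    (hf : DifferentiableAt ℝ f y) :
    pd j (fun z => c * f z) y = c * pd j f y := by
  rw [pd, fderiv_const_mul hf c]; rfl

theorem contDiff_det {E : Type*} [NormedAddCommGroup E] [NormedSpace ℝ E] {m : ℕ}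
    {f : E → Matrix (Fin m) (Fin m) ℝ} (hf : ∀ i j, ContDiff ℝ (⊤ : ℕ∞) fun x => f x i j) :
    ContDiff ℝ (⊤ : ℕ∞) fun x => (f x).det := by
  have h : (fun x => (f x).det)
      = fun x => ∑ σ : Equiv.Perm (Fin m),
          ((Equiv.Perm.sign σ : ℤ) : ℝ) * ∏ i, f x (σ i) i := by
    funext x; rw [Matrix.det_apply']
  rw [h]
  exact ContDiff.sum fun σ _ => contDiff_const.mul (contDiff_prod fun i _ => hf (σ i) i)

theorem cramer_single_eq_adjugate {m : ℕ} (A : Matrix (Fin m) (Fin m) ℝ) (k i : Fin m) :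
    A.cramer (Pi.single k 1) i = adjugate Aᵀ k i := by
  rw [adjugate_def]
  simp [transpose_transpose]

theorem det_updateCol_eq {m : ℕ} (A : Matrix (Fin m) (Fin m) ℝ) (i : Fin m)
    (c : Fin m → ℝ) :
    (A.updateCol i c).det = ∑ k, adjugate Aᵀ k i * c k := by
  rw [← cramer_apply]
  have hc : c = ∑ k, c k • (Pi.single k (1 : ℝ) : Fin m → ℝ) := by
    funext l
    rw [Finset.sum_apply]
    simp [Pi.single_apply]
  conv_lhs => rw [hc]
  rw [map_sum A.cramer]
  rw [Finset.sum_apply]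
  refine Finset.sum_congr rfl fun k _ => ?_
  rw [LinearMap.map_smul]
  simp [cramer_single_eq_adjugate, mul_comm]

theorem hasDerivAt_det {m : ℕ} {A : ℝ → Matrix (Fin m) (Fin m) ℝ}
    {A' : Matrix (Fin m) (Fin m) ℝ} {t : ℝ}
    (h : ∀ i j, HasDerivAt (fun s => A s i j) (A' i j) t) :
    HasDerivAt (fun s => (A s).det)
      (∑ i, ∑ k, adjugate (A t)ᵀ k i * A' k i) t := by
  have key : HasDerivAt (fun s => (A s).det)
      (∑ σ : Equiv.Perm (Fin m), ((Equiv.Perm.sign σ : ℤ) : ℝ) *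
        ∑ i, (∏ j ∈ Finset.univ.erase i, A t (σ j) j) • A' (σ i) i) t := by
    have hfun : (fun s => (A s).det)
        = fun s => ∑ σ : Equiv.Perm (Fin m),
            ((Equiv.Perm.sign σ : ℤ) : ℝ) * ∏ i, A s (σ i) i := by
      funext s; rw [Matrix.det_apply']
    rw [hfun]
    exact HasDerivAt.fun_sum fun σ _ =>
      (HasDerivAt.fun_finsetProd fun i _ => h (σ i) i).const_mul _
  convert key using 1
  calc ∑ i, ∑ k, adjugate (A t)ᵀ k i * A' k i
      = ∑ i, ((A t).updateCol i fun k => A' k i).det := by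
        refine Finset.sum_congr rfl fun i _ => (det_updateCol_eq (A t) i _).symm
    _ = ∑ i, ∑ σ : Equiv.Perm (Fin m), ((Equiv.Perm.sign σ : ℤ) : ℝ) *
          (A' (σ i) i * ∏ j ∈ Finset.univ.erase i, A t (σ j) j) := by
        refine Finset.sum_congr rfl fun i _ => ?_
        rw [Matrix.det_apply']
        refine Finset.sum_congr rfl fun σ _ => ?_
        congr 1
        rw [← Finset.mul_prod_erase _ _ (Finset.mem_univ i)]
        refine congrArg₂ (· * ·) ?_ (Finset.prod_congr rfl fun j hj => ?_)
        · simp [Matrix.updateCol_apply]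
        · simp [Matrix.updateCol_apply, (Finset.mem_erase.mp hj).1]
    _ = ∑ σ : Equiv.Perm (Fin m), ((Equiv.Perm.sign σ : ℤ) : ℝ) *
          ∑ i, (∏ j ∈ Finset.univ.erase i, A t (σ j) j) • A' (σ i) i := by
        rw [Finset.sum_comm]
        refine Finset.sum_congr rfl fun σ _ => ?_
        rw [Finset.mul_sum]
        refine Finset.sum_congr rfl fun i _ => ?_
        simp only [smul_eq_mul]
        ring

theorem hasDerivAt_log_det {m : ℕ} {A : ℝ → Matrix (Fin m) (Fin m) ℝ}
    {A' : Matrix (Fin m) (Fin m) ℝ} {t : ℝ}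
    (h : ∀ i j, HasDerivAt (fun s => A s i j) (A' i j) t)
    (hp : (A t).PosDef) :
    HasDerivAt (fun s => Real.log (A s).det) (∑ i, ∑ j, (A t)⁻¹ i j * A' i j) t := by
  have hd := (hasDerivAt_det h).log hp.det_pos.ne'
  convert hd using 1
  have hsym : (A t)ᵀ = A t := by
    rw [← conjTranspose_eq_transpose_of_trivial]; exact hp.isHermitian
  rw [hsym]
  have hinv : ∀ i j, (A t)⁻¹ i j = (A t).det⁻¹ * adjugate (A t) i j := by
    intro i j
    rw [Matrix.inv_def, Ring.inverse_eq_inv]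
    simp [Matrix.smul_apply, smul_eq_mul]
  rw [eq_div_iff hp.det_pos.ne']
  calc (∑ i, ∑ j, (A t)⁻¹ i j * A' i j) * (A t).det
      = ∑ i, ∑ j, adjugate (A t) i j * A' i j := by
        rw [Finset.sum_mul]
        refine Finset.sum_congr rfl fun i _ => ?_
        rw [Finset.sum_mul]
        refine Finset.sum_congr rfl fun j _ => ?_
        rw [hinv]
        field_simp
        exact (fun d a b hd => by rw [mul_assoc, mul_div_cancel_left₀ _ hd] : ∀ d a b : ℝ, d ≠ 0 → d * a * b / d = a * b) _ _ _ hp.det_pos.ne'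
    _ = ∑ i, ∑ k, adjugate (A t) k i * A' k i := Finset.sum_comm

theorem hasFDerivAt_integral_param {F : (Fin n → ℝ) × ℝ → ℝ} (hF : ContDiff ℝ (⊤ : ℕ∞) F)
    (a b : ℝ) (x₀ : Fin n → ℝ) :
    HasFDerivAt (fun y => ∫ s in a..b, F (y, s))
      (∫ s in a..b, (fderiv ℝ F (x₀, s)).comp (ContinuousLinearMap.inl ℝ (Fin n → ℝ) ℝ)) x₀ := by
  have hFc : Continuous F := hF.continuous
  have hF' : Continuous fun p : (Fin n → ℝ) × ℝ =>
      (fderiv ℝ F p).comp (ContinuousLinearMap.inl ℝ (Fin n → ℝ) ℝ) :=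
    (hF.continuous_fderiv (by simp)).clm_comp continuous_const
  obtain ⟨C, hC⟩ :=
    ((isCompact_closedBall x₀ 1).prod isCompact_uIcc).exists_bound_of_continuousOn
      hF'.continuousOn
  refine intervalIntegral.hasFDerivAt_integral_of_dominated_of_fderiv_le
    (F' := fun y s => (fderiv ℝ F (y, s)).comp (ContinuousLinearMap.inl ℝ (Fin n → ℝ) ℝ))
    (bound := fun _ => C) (Metric.ball_mem_nhds x₀ one_pos) ?_ ?_ ?_ ?_ ?_ ?_
  · exact Filter.Eventually.of_forall fun y =>
      (hFc.comp (Continuous.prodMk continuous_const continuous_id)).aestronglyMeasurable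
  · exact (hFc.comp (Continuous.prodMk continuous_const continuous_id)).intervalIntegrable a b
  · exact (hF'.comp (Continuous.prodMk continuous_const continuous_id)).aestronglyMeasurable
  · refine MeasureTheory.ae_of_all _ fun s hs y hy => hC (y, s) ?_
    exact ⟨Metric.ball_subset_closedBall hy, Set.uIoc_subset_uIcc hs⟩
  · exact intervalIntegrable_const
  · exact MeasureTheory.ae_of_all _ fun s hs y hy =>
      hasFDerivAt_slice ((hF.differentiable (by simp)) (y, s)).hasFDerivAt

theorem pd_integral_param {F : (Fin n → ℝ) × ℝ → ℝ} (hF : ContDiff ℝ (⊤ : ℕ∞) F)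
    (i : Fin n) (a b : ℝ) (x₀ : Fin n → ℝ) :
    pd i (fun y => ∫ s in a..b, F (y, s)) x₀ = ∫ s in a..b, pdx i F (x₀, s) := by
  rw [pd, (hasFDerivAt_integral_param hF a b x₀).fderiv]
  have hint : IntervalIntegrable
      (fun s : ℝ => (fderiv ℝ F (x₀, s)).comp (ContinuousLinearMap.inl ℝ (Fin n → ℝ) ℝ))
      MeasureTheory.volume a b := by
    have : Continuous fun s : ℝ =>
        (fderiv ℝ F (x₀, s)).comp (ContinuousLinearMap.inl ℝ (Fin n → ℝ) ℝ) :=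
      ((hF.continuous_fderiv (by simp)).clm_comp continuous_const).comp
        (Continuous.prodMk continuous_const continuous_id)
    exact this.intervalIntegrable a b
  rw [ContinuousLinearMap.intervalIntegral_apply hint (Pi.single i 1)]
  simp [pdx]

end EvoAux

/-- Along the flow ∂ₜ g_{ij} = ∂_i∂_j log det g with g(0) = g₀, setting
φ̇ = log(det g/det g₀), φ = ∫₀ᵗ φ̇, and Ψ = tφ̇ − φ − nt, one has the evolution
identity (∂ₜ − L_g)Ψ = −tr_g g₀, where L_g u = gⁱʲ∂_i∂_j u. -/
theorem evolution_identity_Psi {n : ℕ}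
    (g : (Fin n → ℝ) → ℝ → Matrix (Fin n) (Fin n) ℝ)
    (g₀ : (Fin n → ℝ) → Matrix (Fin n) (Fin n) ℝ)
    (hsm : ∀ i j, ContDiff ℝ (⊤ : ℕ∞) (fun p : (Fin n → ℝ) × ℝ => g p.1 p.2 i j))
    (hpos : ∀ x t, (g x t).PosDef)
    (hg₀pos : ∀ x, (g₀ x).PosDef)
    (hinit : ∀ x, g x 0 = g₀ x)
    (hflow : ∀ (x : Fin n → ℝ) (t : ℝ) (i j : Fin n),
      deriv (fun s => g x s i j) t = pd i (pd j (fun y => Real.log (g y t).det)) x)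
    (φdot φ Ψ : (Fin n → ℝ) → ℝ → ℝ)
    (hφdot : ∀ x t, φdot x t = Real.log ((g x t).det / (g₀ x).det))
    (hφ : ∀ x t, φ x t = ∫ s in (0 : ℝ)..t, φdot x s)
    (hΨ : ∀ x t, Ψ x t = t * φdot x t - φ x t - n * t) :
    ∀ (x : Fin n → ℝ) (t : ℝ),
      deriv (fun s => Ψ x s) t
        - ∑ i, ∑ j, (g x t)⁻¹ i j * pd i (pd j (fun y => Ψ y t)) x
      = - ∑ i, ∑ j, (g x t)⁻¹ i j * g₀ x i j := by
  intro x t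
  classical
  open Matrix MeasureTheory EvoAux in
  have hdet_pos : ∀ p : (Fin n → ℝ) × ℝ, 0 < (g p.1 p.2).det := fun p => (hpos p.1 p.2).det_pos
  have hdet_cd : ContDiff ℝ (⊤ : ℕ∞) fun p : (Fin n → ℝ) × ℝ => (g p.1 p.2).det :=
    EvoAux.contDiff_det fun i j => hsm i j
  set ld : (Fin n → ℝ) × ℝ → ℝ := fun p => Real.log (g p.1 p.2).det with hld_def
  have hld_cd : ContDiff ℝ (⊤ : ℕ∞) ld := hdet_cd.log fun p => (hdet_pos p).ne'
  set Φ : (Fin n → ℝ) × ℝ → ℝ := fun p => ld p - ld (p.1, 0) with hΦ_def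
  have hld0_cd : ContDiff ℝ (⊤ : ℕ∞) fun p : (Fin n → ℝ) × ℝ => ld (p.1, 0) :=
    hld_cd.comp (contDiff_fst.prodMk contDiff_const)
  have hΦ_cd : ContDiff ℝ (⊤ : ℕ∞) Φ := hld_cd.sub hld0_cd
  have hφdotΦ : ∀ (y : Fin n → ℝ) (s : ℝ), φdot y s = Φ (y, s) := by
    intro y s
    rw [hφdot y s, Real.log_div (hdet_pos (y, s)).ne' (hg₀pos y).det_pos.ne']
    simp only [hΦ_def, hld_def]
    rw [hinit y]
  set P2 : Fin n → Fin n → ((Fin n → ℝ) × ℝ) → ℝ :=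
    fun i j => EvoAux.pdx i (EvoAux.pdx j ld) with hP2_def
  have hP2_cd : ∀ i j, ContDiff ℝ (⊤ : ℕ∞) (P2 i j) := fun i j =>
    EvoAux.contDiff_pdx (EvoAux.contDiff_pdx hld_cd j) i
  -- the flow, in terms of `pdx`
  have hflowP : ∀ (y : Fin n → ℝ) (s : ℝ) (i j : Fin n),
      deriv (fun u => g y u i j) s = P2 i j (y, s) := by
    intro y s i j
    rw [hflow y s i j]
    exact EvoAux.pd_pd_slice hld_cd i j y s
  have hGder : ∀ (y : Fin n → ℝ) (s : ℝ) (i j : Fin n),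
      HasDerivAt (fun u => g y u i j) (P2 i j (y, s)) s := by
    intro y s i j
    have hd : DifferentiableAt ℝ (fun u => g y u i j) s :=
      (((hsm i j).comp (contDiff_prodMk_right y)).differentiable (by simp)) s
    have h := hd.hasDerivAt
    rwa [hflowP y s i j] at h
  -- time derivative of log det g
  have hldder : HasDerivAt (fun s => ld (x, s))
      (∑ i, ∑ j, (g x t)⁻¹ i j * P2 i j (x, t)) t := by
    have h := EvoAux.hasDerivAt_log_det (A := fun s => g x s)
      (A' := Matrix.of fun i j => P2 i j (x, t)) (t := t)
      (fun i j => hGder x t i j) (hpos x t)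
    exact h
  have hΦder : HasDerivAt (fun s => Φ (x, s))
      (∑ i, ∑ j, (g x t)⁻¹ i j * P2 i j (x, t)) t := by
    have h : (fun s => Φ (x, s)) = fun s => ld (x, s) - ld (x, 0) := rfl
    rw [h]
    exact hldder.sub_const _
  -- φ as an integral of Φ
  have hφslice : ∀ c : ℝ, (fun z => φ z c) = fun z => ∫ s in (0:ℝ)..c, Φ (z, s) := by
    intro c
    funext z
    rw [hφ z c]
    exact intervalIntegral.integral_congr fun u _ => hφdotΦ z u
  have hΦxc : Continuous fun u : ℝ => Φ (x, u) :=
    hΦ_cd.continuous.comp (Continuous.prodMk continuous_const continuous_id)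
  have hφder : HasDerivAt (fun s => φ x s) (Φ (x, t)) t := by
    have h : (fun s => φ x s) = fun s => ∫ u in (0:ℝ)..s, Φ (x, u) := by
      funext s; rw [hφ x s]; exact intervalIntegral.integral_congr fun u _ => hφdotΦ x u
    rw [h]
    exact (hΦxc.integral_hasStrictDerivAt 0 t).hasDerivAt
  -- time derivative of Ψ
  have hΨder : deriv (fun s => Ψ x s) t
      = t * (∑ i, ∑ j, (g x t)⁻¹ i j * P2 i j (x, t)) - n := by
    have hfun : (fun s => Ψ x s) = fun s => s * Φ (x, s) - φ x s - (n : ℝ) * s := by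
      funext s; rw [hΨ x s, hφdotΦ x s]
    rw [hfun]
    have h1 : HasDerivAt (fun s : ℝ => s * Φ (x, s))
        (1 * Φ (x, t) + t * (∑ i, ∑ j, (g x t)⁻¹ i j * P2 i j (x, t))) t :=
      (hasDerivAt_id t).mul hΦder
    have h2 : HasDerivAt (fun s : ℝ => (n : ℝ) * s) ((n : ℝ) * 1) t :=
      HasDerivAt.const_mul (n : ℝ) (hasDerivAt_id t)
    rw [show deriv (fun s => s * Φ (x, s) - φ x s - (n : ℝ) * s) t = _ from ((h1.sub hφder).sub h2).deriv]
    ring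
  -- second spatial derivatives of Φ
  have hpdxΦ : ∀ j, EvoAux.pdx j Φ
      = fun p => EvoAux.pdx j ld p - EvoAux.pdx j ld (p.1, 0) :=
    fun j => EvoAux.pdx_sub_comp hld_cd j
  have hpdx2Φ : ∀ i j, ∀ p : (Fin n → ℝ) × ℝ,
      EvoAux.pdx i (EvoAux.pdx j Φ) p = P2 i j p - P2 i j (p.1, 0) := by
    intro i j p
    rw [hpdxΦ j, EvoAux.pdx_sub_comp (EvoAux.contDiff_pdx hld_cd j) i]
  -- FTC for ∫ P2
  have hcontP2 : ∀ i j, Continuous fun s : ℝ => P2 i j (x, s) := fun i j =>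
    (hP2_cd i j).continuous.comp (Continuous.prodMk continuous_const continuous_id)
  have hint2 : ∀ i j, (∫ s in (0:ℝ)..t, P2 i j (x, s)) = g x t i j - g₀ x i j := by
    intro i j
    have h := intervalIntegral.integral_deriv_eq_sub' (a := 0) (b := t)
      (fun u => g x u i j) (funext fun s => hflowP x s i j)
      (fun s _ => (((hsm i j).comp (contDiff_prodMk_right x)).differentiable (by simp)) s)
      ((hcontP2 i j).continuousOn)
    rw [h]
    show g x t i j - g x 0 i j = _
    rw [hinit x]
  -- Hessian of Ψ(·,t)
  have hHessΨ : ∀ i j : Fin n, pd i (pd j (fun y => Ψ y t)) x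
      = t * P2 i j (x, t) - g x t i j + g₀ x i j := by
    intro i j
    have hG := EvoAux.contDiff_pdx hΦ_cd j
    have hfun : (fun y => Ψ y t) = fun y => t * Φ (y, t) - φ y t - (n : ℝ) * t := by
      funext y; rw [hΨ y t, hφdotΦ y t]
    have hstep1 : pd j (fun y => Ψ y t)
        = fun y => t * EvoAux.pdx j Φ (y, t) - ∫ s in (0:ℝ)..t, EvoAux.pdx j Φ (y, s) := by
      funext y
      rw [hfun]
      have hdΦt : DifferentiableAt ℝ (fun z => Φ (z, t)) y :=
        (EvoAux.hasFDerivAt_slice ((hΦ_cd.differentiable (by simp)) (y, t)).hasFDerivAt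
          ).differentiableAt
      have hdφt : DifferentiableAt ℝ (fun z => φ z t) y := by
        rw [hφslice t]
        exact (EvoAux.hasFDerivAt_integral_param hΦ_cd 0 t y).differentiableAt
      rw [EvoAux.pd_sub_const, EvoAux.pd_sub j (hdΦt.const_mul t) hdφt,
        EvoAux.pd_const_mul j t hdΦt, EvoAux.pd_slice hΦ_cd j y t]
      congr 1
      rw [hφslice t, EvoAux.pd_integral_param hΦ_cd j 0 t y]
    rw [hstep1]
    have hdGt : DifferentiableAt ℝ (fun z => EvoAux.pdx j Φ (z, t)) x :=
      (EvoAux.hasFDerivAt_slice ((hG.differentiable (by simp)) (x, t)).hasFDerivAt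
        ).differentiableAt
    have hdGint : DifferentiableAt ℝ
        (fun z => ∫ s in (0:ℝ)..t, EvoAux.pdx j Φ (z, s)) x :=
      (EvoAux.hasFDerivAt_integral_param hG 0 t x).differentiableAt
    rw [EvoAux.pd_sub i (hdGt.const_mul t) hdGint, EvoAux.pd_const_mul i t hdGt,
      EvoAux.pd_slice hG i x t, EvoAux.pd_integral_param hG i 0 t x]
    have hval : ∀ s : ℝ, EvoAux.pdx i (EvoAux.pdx j Φ) (x, s)
        = P2 i j (x, s) - P2 i j (x, 0) := fun s => hpdx2Φ i j (x, s)
    rw [hval t]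
    rw [intervalIntegral.integral_congr (g := fun s => P2 i j (x, s) - P2 i j (x, 0))
      fun s _ => hval s]
    rw [intervalIntegral.integral_sub ((hcontP2 i j).intervalIntegrable 0 t)
      (intervalIntegrable_const), hint2 i j, intervalIntegral.integral_const]
    simp only [smul_eq_mul, sub_zero]
    ring
  -- the trace identity
  have htr : (∑ i, ∑ j, (g x t)⁻¹ i j * g x t i j) = (n : ℝ) := by
    have hsymg : (g x t)ᵀ = g x t := by
      rw [← conjTranspose_eq_transpose_of_trivial]; exact (hpos x t).isHermitian
    have h1 : (g x t)⁻¹ * g x t = 1 :=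
      Matrix.nonsing_inv_mul _ (hpos x t).det_pos.ne'.isUnit
    calc (∑ i, ∑ j, (g x t)⁻¹ i j * g x t i j)
        = ∑ i, ∑ j, (g x t)⁻¹ i j * g x t j i := by
          refine Finset.sum_congr rfl fun i _ => Finset.sum_congr rfl fun j _ => ?_
          congr 1
          have h2 : (g x t)ᵀ j i = g x t i j := Matrix.transpose_apply _ j i
          rw [← h2, hsymg]
      _ = Matrix.trace ((g x t)⁻¹ * g x t) := by
          simp [Matrix.trace, Matrix.mul_apply, Matrix.diag]
      _ = n := by rw [h1]; simp
  -- final assembly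
  rw [hΨder]
  have hexp : (∑ i, ∑ j, (g x t)⁻¹ i j * pd i (pd j (fun y => Ψ y t)) x)
      = t * (∑ i, ∑ j, (g x t)⁻¹ i j * P2 i j (x, t)) - (n : ℝ)
        + ∑ i, ∑ j, (g x t)⁻¹ i j * g₀ x i j := by
    calc (∑ i, ∑ j, (g x t)⁻¹ i j * pd i (pd j (fun y => Ψ y t)) x)
        = ∑ i, ∑ j, (t * ((g x t)⁻¹ i j * P2 i j (x, t))
            - (g x t)⁻¹ i j * g x t i j + (g x t)⁻¹ i j * g₀ x i j) := by
          refine Finset.sum_congr rfl fun i _ => Finset.sum_congr rfl fun j _ => ?_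
          rw [hHessΨ i j]; ring
      _ = t * (∑ i, ∑ j, (g x t)⁻¹ i j * P2 i j (x, t))
            - (∑ i, ∑ j, (g x t)⁻¹ i j * g x t i j)
            + ∑ i, ∑ j, (g x t)⁻¹ i j * g₀ x i j := by
          simp only [Finset.sum_add_distrib, Finset.sum_sub_distrib, ← Finset.mul_sum]
      _ = t * (∑ i, ∑ j, (g x t)⁻¹ i j * P2 i j (x, t)) - (n : ℝ)
            + ∑ i, ∑ j, (g x t)⁻¹ i j * g₀ x i j := by rw [htr]
  rw [hexp]
  ring
end
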